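/- arXiv:2110.03472 — 3 statements merged into one kernel-verified Lean document; each statement's English description precedes it below -/
import Mathlib

section
/- Let D be a triangulated category with a t-structure. Every t-exact triangulated subcategory of D is H^0-stable (closed under the cohomology functor H^0). Conversely, if the t-structure is bounded, then every H^0-stable thick subcategory of D is t-exact. -/
open CategoryTheory Limits Pretriangulated ZeroObject

universe v u

namespace Paper

variable {C : Type u} [Category.{v} C] [Preadditive C] [HasZeroObject C]
  [HasShift C ℤ] [∀ n : ℤ, (CategoryTheory.shiftFunctor C n).Additive] [Pretriangulated C]
  [HasBinaryBiproducts C]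

/-- A class of objects closed under isomorphism. -/
def ClosedIso (P : C → Prop) : Prop := ∀ ⦃X Y : C⦄, (X ≅ Y) → P X → P Y

/-- A class of objects closed under extensions. -/
def ExtClosed (P : C → Prop) : Prop :=
  ∀ T : Triangle C, T ∈ (distTriang C) → P T.obj₁ → P T.obj₃ → P T.obj₂

/-- A suspended subcategory: additive (iso-closed, contains 0, closed under finite sums via
extensions), closed under the suspension `Σ = ⟦1⟧` and under extensions. -/
structure Suspended (P : C → Prop) : Prop where
  iso : ClosedIso P
  zero : P 0
  shift : ∀ ⦃X : C⦄, P X → P (X⟦(1:ℤ)⟧)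
  ext : ExtClosed P

/-- A t-structure `(L, G) = (D^{≤0}, D^{>0})`: Hom-orthogonality, every object is an extension,
`L` is suspended; both classes are closed under isomorphism. -/
structure IsTStr (L G : C → Prop) : Prop where
  isoL : ClosedIso L
  isoG : ClosedIso G
  zeroL : L 0
  homZero : ∀ ⦃X Y : C⦄, L X → G Y → ∀ f : X ⟶ Y, f = 0
  trunc : ∀ X : C, ∃ (A B : C) (f : A ⟶ X) (g : X ⟶ B) (h : B ⟶ A⟦(1:ℤ)⟧),
    Triangle.mk f g h ∈ (distTriang C) ∧ L A ∧ G B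
  shiftL : ∀ ⦃X : C⦄, L X → L (X⟦(1:ℤ)⟧)
  extL : ExtClosed L

/-- The right orthogonal `U^{⊥₀}` of a class of objects. -/
def rightOrth (U : C → Prop) (Y : C) : Prop := ∀ X : C, U X → ∀ f : X ⟶ Y, f = 0

/-- `Y ∈ P^{⊥_{≤ m}}`: `Hom(P, Σ^i Y) = 0` for all `i ≤ m`. -/
def perpLe (P : C) (m : ℤ) (Y : C) : Prop := ∀ i : ℤ, i ≤ m → ∀ f : P ⟶ Y⟦i⟧, f = 0

/-- `Y ∈ P^{⊥_{> m}}`: `Hom(P, Σ^i Y) = 0` for all `i > m`. -/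
def perpGt (P : C) (m : ℤ) (Y : C) : Prop := ∀ i : ℤ, m < i → ∀ f : P ⟶ Y⟦i⟧, f = 0

/-- `Y ∈ P^{⊥_ℤ}`: `Hom(P, Σ^i Y) = 0` for all integers `i`. -/
def perpZ (P : C) (Y : C) : Prop := ∀ i : ℤ, ∀ f : P ⟶ Y⟦i⟧, f = 0

/-- `X ∈ ^{⊥_{>0}}P`: `Hom(X, Σ^i P) = 0` for all `i > 0`. -/
def leftPerpGt0 (P : C) (X : C) : Prop := ∀ i : ℤ, 0 < i → ∀ f : X ⟶ P⟦i⟧, f = 0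

/-- `susp(P)`, the smallest suspended subcategory containing `P`. -/
def suspObj (P : C) (X : C) : Prop := ∀ U : C → Prop, Suspended U → U P → U X

/-- An additive subcategory closed under direct summands. -/
structure AddSub (U : C → Prop) : Prop where
  iso : ClosedIso U
  zero : U 0
  biprod : ∀ X Y : C, U X → U Y → U (X ⊞ Y)
  summand : ∀ X Y : C, U (X ⊞ Y) → U X

/-- `add(P)`: the additive closure of `P` (finite direct sums of direct summands). -/
def addObj (P : C) (X : C) : Prop := ∀ U : C → Prop, AddSub U → U P → U X

/-- A thick triangulated subcategory. -/
structure ThickSub (U : C → Prop) : Prop where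
  iso : ClosedIso U
  zero : U 0
  shift : ∀ ⦃X : C⦄, U X → ∀ n : ℤ, U (X⟦n⟧)
  ext : ExtClosed U
  summand : ∀ X Y : C, U (X ⊞ Y) → U X

/-- `thick(P)`: the smallest thick subcategory containing `P`. -/
def thickObj (P : C) (X : C) : Prop := ∀ U : C → Prop, ThickSub U → U P → U X

/-- A triangulated subcategory (iso-closed, shift-closed both ways, extension-closed). -/
structure TriangSub (U : C → Prop) : Prop where
  iso : ClosedIso U
  zero : U 0
  shift : ∀ ⦃X : C⦄, U X → ∀ n : ℤ, U (X⟦n⟧)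
  ext : ExtClosed U

/-- `P` is presilting: `Hom(P, Σ^n P) = 0` for all `n > 0`. -/
def Presilting (P : C) : Prop := ∀ n : ℤ, 0 < n → ∀ f : P ⟶ P⟦n⟧, f = 0

/-- `P` is partial silting: `(susp(P), P^{⊥_{≤0}})` is a t-structure and
`susp(P) ⊆ P^{⊥_{>0}}`. -/
def PartialSilting (P : C) : Prop :=
  IsTStr (suspObj P) (perpLe P 0) ∧ ∀ X : C, suspObj P X → perpGt P 0 X

/-- `S` is silting: partial silting with `susp(S) = S^{⊥_{>0}}`. -/
def Silting (S : C) : Prop :=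
  PartialSilting S ∧ ∀ X : C, suspObj S X ↔ perpGt S 0 X

/-- `X ∈ D^{≤ n}` for the t-structure with aisle `L`. -/
def DLe (L : C → Prop) (n : ℤ) (X : C) : Prop := L (X⟦n⟧)

/-- `X ∈ D^{> m}` for the t-structure with co-aisle `G`. -/
def DGt (G : C → Prop) (m : ℤ) (X : C) : Prop := G (X⟦m⟧)

/-- The t-structure `(L, G)` is bounded. -/
def BoundedTStr (L G : C → Prop) : Prop :=
  ∀ X : C, (∃ n : ℤ, DLe L n X) ∧ (∃ m : ℤ, DGt G m X)

/-- `H` is (a choice of) the `i`-th cohomology `H^i(X) = σ^{≤ i} σ^{> i-1} X` of `X` with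
respect to the t-structure `(L, G)`, expressed by the two truncation triangles. -/
def IsCohomAt (L G : C → Prop) (i : ℤ) (X H : C) : Prop :=
  ∃ (A B B' : C) (f : A ⟶ X) (g : X ⟶ B) (h : B ⟶ A⟦(1:ℤ)⟧)
    (f' : H ⟶ B) (g' : B ⟶ B') (h' : B' ⟶ H⟦(1:ℤ)⟧),
    Triangle.mk f g h ∈ (distTriang C) ∧ DLe L (i-1) A ∧ DGt G (i-1) B ∧
    Triangle.mk f' g' h' ∈ (distTriang C) ∧ DLe L i H ∧ DGt G i B'

/-- The heart `D^0 = D^{≤0} ∩ D^{>-1}` of the t-structure `(L, G)`. -/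
def Heart (L G : C → Prop) (X : C) : Prop := L X ∧ DGt G (-1) X

/-- A t-exact subcategory: a triangulated subcategory closed under the truncation `σ^{≤0}`
of the t-structure `(L, G)`. -/
def TExactSub (L G : C → Prop) (S : C → Prop) : Prop :=
  TriangSub S ∧
    ∀ (X A B : C) (f : A ⟶ X) (g : X ⟶ B) (h : B ⟶ A⟦(1:ℤ)⟧),
      S X → Triangle.mk f g h ∈ (distTriang C) → L A → G B → S A


/-- The class of objects `U` admits coreflections: every object has a couniversal morphism
from `U`, i.e. the inclusion of `U` admits a right adjoint. -/
def HasCoreflections (U : C → Prop) : Prop :=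
  ∀ X : C, ∃ (A : C) (ε : A ⟶ X), U A ∧
    ∀ A' : C, U A' → ∀ g : A' ⟶ X, ∃! g' : A' ⟶ A, g' ≫ ε = g

/-- `X` is a `2_S`-term object: `X ∈ add(S) * Σ add(S)`. -/
def TwoTerm (S X : C) : Prop :=
  ∃ (S₁ S₀ : C) (f : S₁ ⟶ S₀) (g : S₀ ⟶ X) (h : X ⟶ S₁⟦(1:ℤ)⟧),
    Triangle.mk f g h ∈ (distTriang C) ∧ addObj S S₁ ∧ addObj S S₀

/-- `X` is indecomposable. -/
def Indec (X : C) : Prop :=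
  ¬ IsZero X ∧ ∀ Y Z : C, (X ≅ Y ⊞ Z) → IsZero Y ∨ IsZero Z

/-- `add(A)` is contravariantly finite: every object admits a right `add(A)`-approximation. -/
def ContravFinAdd (A : C) : Prop :=
  ∀ X : C, ∃ (Q : C) (q : Q ⟶ X), addObj A Q ∧
    ∀ Q' : C, addObj A Q' → ∀ g : Q' ⟶ X, ∃ g' : Q' ⟶ Q, g' ≫ q = g

/-- `S` is a bounded silting object. -/
def BoundedSilting (S : C) : Prop :=
  Silting S ∧ BoundedTStr (suspObj S) (perpLe S 0)

/-- Hom-finiteness of `C` over a field `k`. -/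
def HomFinite (k : Type w) [Field k] [Linear k C] : Prop :=
  ∀ X Y : C, FiniteDimensional k (X ⟶ Y)

/-- The Krull–Schmidt property: every object is a finite direct sum of objects with local
endomorphism rings. -/
def KrullSchmidt : Prop :=
  ∀ X : C, ∃ l : List C, (∀ Y ∈ l, IsLocalRing (End Y)) ∧
    Nonempty (X ≅ l.foldr (· ⊞ ·) 0)

/-- A wide subcategory of the heart of the t-structure `(L, G)`: closed under isomorphisms,
extensions, kernels and cokernels (the latter two expressed via cones and cohomology). -/
structure HeartWide (L G W : C → Prop) : Prop where
  sub : ∀ ⦃X : C⦄, W X → Heart L G X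
  iso : ClosedIso W
  ext : ∀ (X Y Z : C) (f : X ⟶ Y) (g : Y ⟶ Z) (h : Z ⟶ X⟦(1:ℤ)⟧),
    W X → W Z → Heart L G Y → Triangle.mk f g h ∈ (distTriang C) → W Y
  kerCoker : ∀ (X Y Z : C) (f : X ⟶ Y) (g : Y ⟶ Z) (h : Z ⟶ X⟦(1:ℤ)⟧),
    W X → W Y → Triangle.mk f g h ∈ (distTriang C) →
    (∀ K : C, IsCohomAt L G (-1) Z K → W K) ∧ (∀ Q : C, IsCohomAt L G 0 Z Q → W Q)

/-- The subgroup of relations defining `K₀` of the thick subcategory `S`. -/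
def K0Rel (S : C → Prop) : AddSubgroup (FreeAbelianGroup C) :=
  AddSubgroup.closure
    {x | (∃ X : C, ¬ S X ∧ x = FreeAbelianGroup.of X) ∨
      ∃ T : Triangle C, T ∈ (distTriang C) ∧ S T.obj₁ ∧ S T.obj₂ ∧ S T.obj₃ ∧
        x = FreeAbelianGroup.of T.obj₂ - FreeAbelianGroup.of T.obj₁
          - FreeAbelianGroup.of T.obj₃}

/-- The Grothendieck group of the (thick) subcategory `S`. -/
abbrev K0 (S : C → Prop) := FreeAbelianGroup C ⧸ K0Rel S

/-- The class `[X]` in the Grothendieck group. -/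
def K0cls (S : C → Prop) (X : C) : K0 S :=
  QuotientAddGroup.mk (FreeAbelianGroup.of X)

/-- A `2_S`-term presilting sequence `(X₁, …, X_t)` in the ambient subcategory `Amb` with respect
to the silting object `S`, defined recursively: the last term `X` is an indecomposable `2_S`-term
presilting object, and the truncated sequence is a `2_{σ^{>0}_X T}`-term presilting sequence in
`Amb ∩ X^{⊥_ℤ}`, where `T = X ⊕ Q` is the Bongartz completion of `X`. -/
inductive PresiltSeq : (C → Prop) → C → List C → Prop
  | nil (Amb : C → Prop) (S : C) : PresiltSeq Amb S []
  | cons (Amb : C → Prop) (S X : C) (l : List C)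
      (hX : Amb X) (h2 : TwoTerm S X) (hpre : Presilting X) (hind : Indec X)
      -- Bongartz completion `T = X ⊞ Q`, via an approximation triangle `S → Q → X₀ → ΣS`
      (Q X₀ : C) (i : S ⟶ Q) (p : Q ⟶ X₀) (β : X₀ ⟶ S⟦(1:ℤ)⟧)
      (hB : Triangle.mk i p β ∈ (distTriang C)) (hX₀ : addObj X X₀)
      (happrox : ∀ X' : C, addObj X X' → ∀ g : X' ⟶ S⟦(1:ℤ)⟧, ∃ g', g' ≫ β = g)
      -- the truncation `T' = σ^{>0}_X (X ⊞ Q)`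
      (T' A : C) (f : A ⟶ X ⊞ Q) (g : X ⊞ Q ⟶ T') (h : T' ⟶ A⟦(1:ℤ)⟧)
      (hTr : Triangle.mk f g h ∈ (distTriang C)) (hA : suspObj X A) (hT' : perpLe X 0 T')
      (hrest : PresiltSeq (fun Y => Amb Y ∧ perpZ X Y) T' l) :
      PresiltSeq Amb S (l ++ [X])


end Paper

/-!
A t-exact subcategory `S` containing `X` contains `σ^{≤-1}X`, hence `σ^{>-1}X` by the
truncation triangle, hence `H⁰X = σ^{≤0}σ^{>-1}X`.

Conversely, the truncation `σ^{≤0}X ⟶ X` is characterised by the property that every morphism from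
`D^{≤0}` to `X` factors uniquely through it. If `X ∈ D^{≤n+1}` with `n ≥ 0`, then `σ^{>n}X` is a
shift of `H⁰(X⟦n+1⟧)`, so it lies in an `H⁰`-stable `S`, hence so does `σ^{≤n}X`; and
`σ^{≤0}σ^{≤n}X = σ^{≤0}X`. Boundedness starts a downward induction on the top degree of `X`, which
ends at `X ∈ D^{≤0}`, where `σ^{≤0}X = X`.
-/

namespace Paper

section Coreflection

variable {C : Type u} [Category.{v} C] {L : C → Prop}

/-- Unlike a coreflection proper, `A` itself need not lie in `L`. -/
def IsCoreflection (L : C → Prop) {A X : C} (f : A ⟶ X) : Prop :=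
  ∀ U : C, L U → Function.Bijective fun u : U ⟶ A => u ≫ f

lemma isCoreflection_id (X : C) : IsCoreflection L (𝟙 X) := fun _ _ => by
  simp only [Category.comp_id]
  exact Function.bijective_id

lemma IsCoreflection.comp {A X Y : C} {f : A ⟶ X} {g : X ⟶ Y} (hf : IsCoreflection L f)
    (hg : IsCoreflection L g) : IsCoreflection L (f ≫ g) := fun U hU => by
  simpa [Function.comp_def] using (hg U hU).comp (hf U hU)

lemma IsCoreflection.nonempty_iso {A A' X : C} {f : A ⟶ X} {f' : A' ⟶ X}
    (hf : IsCoreflection L f) (hf' : IsCoreflection L f') (hA : L A) (hA' : L A') :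
    Nonempty (A ≅ A') := by
  obtain ⟨φ, hφ : φ ≫ f' = f⟩ := (hf' A hA).2 f
  obtain ⟨ψ, hψ : ψ ≫ f = f'⟩ := (hf A' hA').2 f'
  refine ⟨⟨φ, ψ, (hf A hA).1 ?_, (hf' A' hA').1 ?_⟩⟩
  · simp only [Category.assoc, hψ, hφ, Category.id_comp]
  · simp only [Category.assoc, hφ, hψ, Category.id_comp]

end Coreflection

section Shift

variable {C : Type u} [Category.{v} C] [HasShift C ℤ] {P : C → Prop}

lemma ClosedIso.shift_zero_iff (hP : ClosedIso P) (X : C) : P (X⟦(0 : ℤ)⟧) ↔ P X :=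
  ⟨hP ((shiftFunctorZero C ℤ).app X), hP ((shiftFunctorZero C ℤ).app X).symm⟩

lemma ClosedIso.shift_shift_iff (hP : ClosedIso P) (X : C) {a b c : ℤ} (h : a + b = c) :
    P (X⟦a⟧⟦b⟧) ↔ P (X⟦c⟧) :=
  ⟨hP ((shiftFunctorAdd' C a b c h).app X).symm, hP ((shiftFunctorAdd' C a b c h).app X)⟩

end Shift

section Triangulated

variable {C : Type u} [Category.{v} C] [Preadditive C] [HasZeroObject C]
  [HasShift C ℤ] [∀ n : ℤ, (CategoryTheory.shiftFunctor C n).Additive] [Pretriangulated C]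

lemma distinguished_mk_comp_iso₂ {T : Triangle C} (hT : T ∈ distTriang C) {X : C}
    (e : T.obj₂ ≅ X) : Triangle.mk (T.mor₁ ≫ e.hom) (e.inv ≫ T.mor₂) T.mor₃ ∈ distTriang C :=
  isomorphic_distinguished _ hT _ <| Triangle.isoMk _ _ (Iso.refl _) e.symm (Iso.refl _)
    (show (T.mor₁ ≫ e.hom) ≫ e.inv = 𝟙 _ ≫ T.mor₁ by simp)
    (show (e.inv ≫ T.mor₂) ≫ 𝟙 _ = e.inv ≫ T.mor₂ by simp)
    (show T.mor₃ ≫ (𝟙 T.obj₁)⟦1⟧' = 𝟙 _ ≫ T.mor₃ by simp)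

lemma isCoreflection_mor₁ {L : C → Prop} {T : Triangle C} (hT : T ∈ distTriang C)
    (h₃ : rightOrth L T.obj₃) (h₃' : rightOrth L (T.obj₃⟦(-1 : ℤ)⟧)) :
    IsCoreflection L T.mor₁ := by
  intro U hU
  constructor
  · intro u u' (huu' : u ≫ T.mor₁ = u' ≫ T.mor₁)
    obtain ⟨w, hw⟩ := Triangle.coyoneda_exact₂ _ (inv_rot_of_distTriang _ hT) (u - u')
      (show (u - u') ≫ T.mor₁ = 0 by rw [Preadditive.sub_comp, huu', sub_self])
    rw [← sub_eq_zero, hw, show w = 0 from h₃' U hU w]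
    exact zero_comp
  · intro x
    obtain ⟨u, hu⟩ := Triangle.coyoneda_exact₂ _ hT x (h₃ U hU _)
    exact ⟨u, hu.symm⟩

namespace TriangSub

variable {S : C → Prop} (hS : TriangSub S)
include hS

lemma of_shift {X : C} {n : ℤ} (h : S (X⟦n⟧)) : S X :=
  hS.iso (shiftShiftNeg X n) (hS.shift h (-n))

lemma mem_obj₃ {T : Triangle C} (hT : T ∈ distTriang C) (h₁ : S T.obj₁) (h₂ : S T.obj₂) :
    S T.obj₃ :=
  hS.ext T.rotate (rot_of_distTriang T hT) h₂ (hS.shift h₁ 1)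

lemma mem_obj₁ {T : Triangle C} (hT : T ∈ distTriang C) (h₂ : S T.obj₂) (h₃ : S T.obj₃) :
    S T.obj₁ :=
  hS.ext T.invRotate (inv_rot_of_distTriang T hT) (hS.shift h₃ (-1)) h₂

end TriangSub

namespace IsTStr

variable {L G : C → Prop} (ht : IsTStr L G)
include ht

lemma aisle_shift_of_nonneg {X : C} (hX : L X) {n : ℤ} (hn : 0 ≤ n) : L (X⟦n⟧) := by
  induction n, hn using Int.leInduction with
  | base => exact (ht.isoL.shift_zero_iff X).2 hX
  | succ n _ ih => exact (ht.isoL.shift_shift_iff X rfl).1 (ht.shiftL ih)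

lemma dLe_mono {X : C} {m n : ℤ} (hmn : m ≤ n) (hX : DLe L m X) : DLe L n X :=
  (ht.isoL.shift_shift_iff X (by lia)).1 (ht.aisle_shift_of_nonneg hX (sub_nonneg.2 hmn))

lemma rightOrth_of_dGt {Y : C} {n : ℤ} (hY : DGt G n Y) (hn : 0 ≤ n) :
    rightOrth L Y := fun U hU f =>
  (shiftFunctor C n).map_injective <| by
    simpa using ht.homZero (ht.aisle_shift_of_nonneg hU hn) hY (f⟦n⟧')

lemma isCoreflection_of_distinguished {A X B : C} {f : A ⟶ X} {g : X ⟶ B}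
    {h : B ⟶ A⟦(1 : ℤ)⟧} (hT : Triangle.mk f g h ∈ distTriang C) {n : ℤ} (hB : DGt G n B)
    (hn : 0 ≤ n) : IsCoreflection L f :=
  isCoreflection_mor₁ hT (ht.rightOrth_of_dGt hB hn)
    (ht.rightOrth_of_dGt ((ht.isoG.shift_shift_iff B (by lia)).2 hB)
      (by lia : 0 ≤ n + 1))

lemma aisle_obj₃ {T : Triangle C} (hT : T ∈ distTriang C) (h₁ : L T.obj₁) (h₂ : L T.obj₂) :
    L T.obj₃ :=
  ht.extL T.rotate (rot_of_distTriang T hT) h₂ (ht.shiftL h₁)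

lemma isCoreflection_of_coaisle {A X B : C} {f : A ⟶ X} {g : X ⟶ B} {h : B ⟶ A⟦(1 : ℤ)⟧}
    (hT : Triangle.mk f g h ∈ distTriang C) (hB : G B) : IsCoreflection L f :=
  ht.isCoreflection_of_distinguished hT ((ht.isoG.shift_zero_iff B).2 hB) le_rfl

lemma exists_truncation (X : C) (n : ℤ) :
    ∃ (A B : C) (f : A ⟶ X) (g : X ⟶ B) (h : B ⟶ A⟦(1 : ℤ)⟧),
      Triangle.mk f g h ∈ distTriang C ∧ DLe L n A ∧ DGt G n B := by
  obtain ⟨A, B, f, g, h, hT, hA, hB⟩ := ht.trunc (X⟦n⟧)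
  refine ⟨A⟦-n⟧, B⟦-n⟧, _, _, _,
    distinguished_mk_comp_iso₂ (Triangle.shift_distinguished _ hT (-n)) (shiftShiftNeg X n), ?_, ?_⟩
  · exact (ht.isoL.shift_shift_iff A (by lia)).2 ((ht.isoL.shift_zero_iff A).2 hA)
  · exact (ht.isoG.shift_shift_iff B (by lia)).2 ((ht.isoG.shift_zero_iff B).2 hB)

end IsTStr

lemma TExactSub.mem_of_isCohomAt {L G S : C → Prop} (ht : IsTStr L G) (hS : TExactSub L G S)
    {X H : C} (hX : S X) (hH : IsCohomAt L G 0 X H) : S H := by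
  obtain ⟨hS, hσ⟩ := hS
  obtain ⟨A, B, B', _, _, _, _, _, _, hT, hA, hB, hT', hH, hB'⟩ := hH
  have hSA : S A := hS.of_shift <|
    hσ _ _ _ _ _ _ (hS.shift hX (0 - 1)) (Triangle.shift_distinguished _ hT (0 - 1)) hA hB
  exact hσ _ _ _ _ _ _ (hS.mem_obj₃ hT hSA hX) hT' ((ht.isoL.shift_zero_iff H).1 hH)
    ((ht.isoG.shift_zero_iff B').1 hB')

def IsH0Stable (L G S : C → Prop) : Prop := ∀ X H : C, S X → IsCohomAt L G 0 X H → S H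

namespace IsTStr

variable {L G S : C → Prop} (ht : IsTStr L G) (hS : TriangSub S) (hst : IsH0Stable L G S)
include ht hS hst

/-- `B⟦n+1⟧` is the `H⁰` of `X⟦n+1⟧`. -/
lemma mem_obj₁_of_truncation {X X' B : C} {f : X' ⟶ X} {g : X ⟶ B} {h : B ⟶ X'⟦(1 : ℤ)⟧}
    (hT : Triangle.mk f g h ∈ distTriang C) (hX : S X) {n : ℤ} (hXn : DLe L (n + 1) X)
    (hX' : DLe L n X') (hB : DGt G n B) : S X' := by
  have hT₁ := Triangle.shift_distinguished _ hT (n + 1)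
  have hBn : L (B⟦n + 1⟧) := ht.aisle_obj₃ hT₁ (ht.dLe_mono (by lia) hX') hXn
  obtain ⟨H, B', _, _, _, hT₂, hH, hB'⟩ := ht.trunc (B⟦n + 1⟧)
  have hSH : S H := hst _ H (hS.shift hX (n + 1))
    ⟨_, _, _, _, _, _, _, _, _, hT₁, (ht.isoL.shift_shift_iff X' (by lia)).2 hX',
      (ht.isoG.shift_shift_iff B (by lia)).2 hB, hT₂, (ht.isoL.shift_zero_iff H).2 hH,
      (ht.isoG.shift_zero_iff B').2 hB'⟩
  obtain ⟨e⟩ := (ht.isCoreflection_of_coaisle hT₂ hB').nonempty_iso (isCoreflection_id _) hH hBn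
  exact hS.mem_obj₁ hT hX (hS.of_shift (hS.iso e hSH))

lemma mem_of_isCoreflection {n : ℤ} (hn : 0 ≤ n) {X A : C} {f : A ⟶ X} (hX : S X)
    (hXn : DLe L n X) (hf : IsCoreflection L f) (hA : L A) : S A := by
  induction n, hn using Int.leInduction generalizing X A with
  | base =>
    obtain ⟨e⟩ := hf.nonempty_iso (isCoreflection_id X) hA ((ht.isoL.shift_zero_iff X).1 hXn)
    exact hS.iso e.symm hX
  | succ n hn ih =>
    obtain ⟨X', B, _, _, _, hT, hX', hB⟩ := ht.exists_truncation X n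
    obtain ⟨A', B', f', _, _, hT', hA', hB'⟩ := ht.trunc X'
    have hf' : IsCoreflection L f' := ht.isCoreflection_of_coaisle hT' hB'
    obtain ⟨e⟩ := (hf'.comp (ht.isCoreflection_of_distinguished hT hB hn)).nonempty_iso hf hA' hA
    exact hS.iso e (ih (ht.mem_obj₁_of_truncation hS hst hT hX hXn hX' hB) hX' hf' hA')

lemma tExactSub_of_bounded (hb : BoundedTStr L G) : TExactSub L G S := by
  refine ⟨hS, fun X A B _ _ _ hX hT hA hB => ?_⟩
  obtain ⟨⟨n, hn⟩, -⟩ := hb X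
  exact ht.mem_of_isCoreflection hS hst (le_max_right n 0) hX
    (ht.dLe_mono (le_max_left n 0) hn) (ht.isCoreflection_of_coaisle hT hB) hA

end IsTStr

end Triangulated

variable {C : Type u} [Category.{v} C] [Preadditive C] [HasZeroObject C]
  [HasShift C ℤ] [∀ n : ℤ, (CategoryTheory.shiftFunctor C n).Additive] [Pretriangulated C]
  [HasBinaryBiproducts C]

/-- Every t-exact triangulated subcategory is `H⁰`-stable; conversely, if the
t-structure is bounded, every `H⁰`-stable thick subcategory is t-exact. -/
theorem statement3 (L G : C → Prop) (ht : IsTStr L G) :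
    (∀ S : C → Prop, TExactSub L G S →
      ∀ X H : C, S X → IsCohomAt L G 0 X H → S H) ∧
    (BoundedTStr L G → ∀ S : C → Prop, ThickSub S →
      (∀ X H : C, S X → IsCohomAt L G 0 X H → S H) → TExactSub L G S) :=
  ⟨fun _ hS _ _ hX hH => hS.mem_of_isCohomAt ht hX hH,
    fun hb _ hS hst => ht.tExactSub_of_bounded ⟨hS.iso, hS.zero, hS.shift, hS.ext⟩ hst hb⟩

end Paper
end

section
/- Two partial silting objects S₁ and S₂ of a triangulated category D generate the same t-structure (i.e., susp(S₁) = susp(S₂)) if and only if add(S₁) = add(S₂). -/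
open CategoryTheory Limits Pretriangulated ZeroObject

universe v u

/-!
Let `L = susp(S₁) = susp(S₂)`. The objects `X` admitting a triangle `A → P → X → ΣA` with
`A ∈ L` and `P ∈ add(S₁)` form a suspended subcategory containing `S₁`: for extension closure,
`Hom(S₁, ΣL) = 0` lifts the `add(S₁)`-part of the third term along the extension, and the cone of
the combined map `P₁ ⊕ P₃ → X₂` is checked to lie in `ΣL` by testing it against the co-aisle.
Hence `S₂` has such a triangle, which splits because `Hom(S₂, ΣL) = 0`, so `S₂ ∈ add(S₁)`.
Conversely an aisle is closed under direct summands, so `add(S₁) = add(S₂)` puts each `Sᵢ` into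
the other's aisle.
-/

namespace Paper

section Additive

variable {C : Type u} [Category.{v} C] [Preadditive C] [HasZeroObject C] [HasBinaryBiproducts C]

lemma addObj_self (P : C) : addObj P P := fun _ _ hP => hP

lemma addObj_trans {P Q X : C} (hQ : addObj P Q) (hX : addObj Q X) : addObj P X :=
  fun U hU hP => hX U hU (hQ U hU hP)

lemma addObj_addSub (P : C) : AddSub (addObj P) where
  iso _ _ e hX U hU hP := hU.iso e (hX U hU hP)
  zero _ hU _ := hU.zero
  biprod X Y hX hY U hU hP := hU.biprod X Y (hX U hU hP) (hY U hU hP)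
  summand X Y hXY U hU hP := hU.summand X Y (hXY U hU hP)

lemma addSub_hom_eq_zero (Y : C) : AddSub (fun X : C => ∀ f : X ⟶ Y, f = 0) where
  iso X X' e hX f := by simpa using e.inv ≫= hX (e.hom ≫ f)
  zero f := (isZero_zero C).eq_of_src f 0
  biprod X X' hX hX' f := biprod.hom_ext' _ _ (by simp [hX (biprod.inl ≫ f)])
    (by simp [hX' (biprod.inr ≫ f)])
  summand X X' hXX' f := by simpa using biprod.inl ≫= hXX' (biprod.fst ≫ f)

lemma addObj_hom_eq_zero {P Q Y : C} (hQ : addObj P Q) (hP : ∀ f : P ⟶ Y, f = 0)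
    (f : Q ⟶ Y) : f = 0 :=
  hQ _ (addSub_hom_eq_zero Y) hP f

end Additive

section Shift

variable {C : Type u} [Category.{v} C] [Preadditive C] [HasShift C ℤ]

lemma perpLe_zero_hom_eq_zero {P W : C} (hW : perpLe P 0 W) (f : P ⟶ W) : f = 0 := by
  simpa using hW 0 le_rfl (f ≫ (shiftFunctorZero C ℤ).inv.app W) =≫
    (shiftFunctorZero C ℤ).hom.app W

lemma shift_hom_eq_zero [∀ n : ℤ, (shiftFunctor C n).Additive] {A W : C}
    (h : ∀ f : A ⟶ W, f = 0) (n : ℤ) (f : A⟦n⟧ ⟶ W⟦n⟧) : f = 0 := by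
  rw [← (shiftFunctor C n).map_preimage f, h ((shiftFunctor C n).preimage f), Functor.map_zero]

end Shift

variable {C : Type u} [Category.{v} C] [Preadditive C] [HasZeroObject C]
  [HasShift C ℤ] [∀ n : ℤ, (CategoryTheory.shiftFunctor C n).Additive] [Pretriangulated C]

lemma suspObj_self (P : C) : suspObj P P := fun _ _ hP => hP

lemma suspObj_trans {P Q X : C} (hQ : suspObj P Q) (hX : suspObj Q X) : suspObj P X :=
  fun U hU hP => hX U hU (hQ U hU hP)

lemma suspObj_suspended (P : C) : Suspended (suspObj P) where
  iso _ _ e hX U hU hP := hU.iso e (hX U hU hP)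
  zero _ hU _ := hU.zero
  shift _ hX U hU hP := hU.shift (hX U hU hP)
  ext T hT h₁ h₃ U hU hP := hU.ext T hT (h₁ U hU hP) (h₃ U hU hP)

lemma eq_zero_of_mor₂_comp_eq_zero {A B X V : C} {f : A ⟶ B} {g : B ⟶ X}
    {k : X ⟶ A⟦(1:ℤ)⟧} (hT : Triangle.mk f g k ∈ distTriang C)
    (hV : ∀ ε : A⟦(1:ℤ)⟧ ⟶ V, ε = 0) (φ : X ⟶ V) (hφ : g ≫ φ = 0) : φ = 0 := by
  obtain ⟨ε, hε⟩ := Triangle.yoneda_exact₃ _ hT φ hφ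
  exact hε.trans ((whisker_eq _ (hV ε)).trans comp_zero)

namespace IsTStr

variable {L G : C → Prop}

lemma mem_of_hom_eq_zero (h : IsTStr L G) {X : C} (hX : ∀ W : C, G W → ∀ f : X ⟶ W, f = 0) :
    L X := by
  obtain ⟨A, B, f, g, k, hT, hA, hB⟩ := h.trunc X
  have hB0 : IsZero B := by
    rw [IsZero.iff_id_eq_zero]
    exact eq_zero_of_mor₂_comp_eq_zero hT (h.homZero (h.shiftL hA) hB) (𝟙 B)
      (by simp [hX B hB g])
  have : IsIso f := ((Triangle.mk f g k).isZero₃_iff_isIso₁ hT).1 hB0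
  exact h.isoL (asIso f) hA

lemma shift_neg_one_mem_of_hom_eq_zero (h : IsTStr L G) {P X Z : C} {s : P ⟶ X} {g : X ⟶ Z}
    {k : Z ⟶ P⟦(1:ℤ)⟧} (hT : Triangle.mk s g k ∈ distTriang C) (hP : L P)
    (hs : ∀ W : C, G W → ∀ χ : X ⟶ W⟦(1:ℤ)⟧, s ≫ χ = 0 → χ = 0) : L (Z⟦(-1:ℤ)⟧) := by
  refine h.mem_of_hom_eq_zero fun W hW ψ => (shiftFunctor C (1:ℤ)).map_eq_zero_iff.mp ?_
  have hsg : s ≫ g = 0 := comp_distTriang_mor_zero₁₂ _ hT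
  let χ : Z ⟶ W⟦(1:ℤ)⟧ := (shiftEquiv C (1:ℤ)).counitIso.inv.app Z ≫ ψ⟦(1:ℤ)⟧'
  have hχ : χ = 0 := eq_zero_of_mor₂_comp_eq_zero hT
    (shift_hom_eq_zero (h.homZero hP hW) 1) χ
    (hs W hW _ (by rw [← Category.assoc, hsg, zero_comp]))
  exact (cancel_epi ((shiftEquiv C (1:ℤ)).counitIso.inv.app Z)).1 (hχ.trans comp_zero.symm)

variable [HasBinaryBiproducts C]

lemma addSub (h : IsTStr L G) : AddSub L where
  iso := h.isoL
  zero := h.zeroL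
  biprod X Y hX hY := h.mem_of_hom_eq_zero fun _ hW =>
    (addSub_hom_eq_zero _).biprod X Y (h.homZero hX hW) (h.homZero hY hW)
  summand X Y hXY := h.mem_of_hom_eq_zero fun _ hW =>
    (addSub_hom_eq_zero _).summand X Y (h.homZero hXY hW)

lemma mem_of_addObj (h : IsTStr L G) {P X : C} (hP : L P) (hX : addObj P X) : L X :=
  hX L h.addSub hP

end IsTStr

variable [HasBinaryBiproducts C]

/-- `add(S) * ΣL` in the notation for extensions of subcategories. -/
def addStarShift (S : C) (L : C → Prop) (X : C) : Prop :=
  ∃ (A P : C) (f : A ⟶ P) (g : P ⟶ X) (k : X ⟶ A⟦(1:ℤ)⟧),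
    Triangle.mk f g k ∈ distTriang C ∧ L A ∧ addObj S P

section addStarShift

variable {S : C} {L G : C → Prop}

lemma addStarShift_closedIso : ClosedIso (addStarShift S L) := by
  rintro X Y e ⟨A, P, f, g, k, hT, hA, hP⟩
  have e' : Triangle.mk f (g ≫ e.hom) (e.inv ≫ k) ≅ Triangle.mk f g k := by
    refine Triangle.isoMk _ _ (Iso.refl A) (Iso.refl P) e.symm ?_ ?_ ?_ <;>
      dsimp only [Triangle.mk] <;> simp
  exact ⟨A, P, f, g ≫ e.hom, e.inv ≫ k, isomorphic_distinguished _ hT _ e', hA, hP⟩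

lemma addStarShift_le (h : IsTStr L G) (hS : L S) {X : C} (hX : addStarShift S L X) : L X := by
  obtain ⟨A, P, f, g, k, hT, hA, hP⟩ := hX
  exact h.extL _ (rot_of_distTriang _ hT) (h.mem_of_addObj hS hP) (h.shiftL hA)

lemma addStarShift_extClosed (h : IsTStr L G) (hS : L S)
    (hSL : ∀ X : C, L X → ∀ f : S ⟶ X⟦(1:ℤ)⟧, f = 0) : ExtClosed (addStarShift S L) := by
  intro T hT hX₁ hX₃
  have hL₁ : L T.obj₁ := addStarShift_le h hS hX₁
  obtain ⟨A₁, P₁, f₁, s₁, k₁, hT₁, hA₁, hP₁⟩ := hX₁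
  obtain ⟨A₃, P₃, f₃, s₃, k₃, hT₃, hA₃, hP₃⟩ := hX₃
  obtain ⟨t, ht⟩ := Triangle.coyoneda_exact₃ T hT s₃ (addObj_hom_eq_zero hP₃ (hSL _ hL₁) _)
  obtain ⟨Z, g, k, hTs⟩ := distinguished_cocone_triangle (biprod.desc (s₁ ≫ T.mor₁) t)
  have hP : addObj S (P₁ ⊞ P₃) := (addObj_addSub S).biprod _ _ hP₁ hP₃
  refine ⟨Z⟦(-1:ℤ)⟧, P₁ ⊞ P₃, _, _, _, inv_rot_of_distTriang _ hTs,
    h.shift_neg_one_mem_of_hom_eq_zero hTs (h.mem_of_addObj hS hP) ?_, hP⟩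
  intro W hW χ hχ
  have hW₁ : ∀ {A : C}, L A → ∀ ε : A⟦(1:ℤ)⟧ ⟶ W⟦(1:ℤ)⟧, ε = 0 :=
    fun hA => shift_hom_eq_zero (h.homZero hA hW) 1
  have hχ₁ : T.mor₁ ≫ χ = 0 := eq_zero_of_mor₂_comp_eq_zero hT₁ (hW₁ hA₁) _
    (by simpa using biprod.inl ≫= hχ)
  obtain ⟨φ, rfl⟩ := Triangle.yoneda_exact₂ T hT χ hχ₁
  have hφ : φ = 0 := eq_zero_of_mor₂_comp_eq_zero hT₃ (hW₁ hA₃) _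
    (by simpa [ht] using biprod.inr ≫= hχ)
  rw [hφ, comp_zero]

lemma addStarShift_suspended (h : IsTStr L G) (hS : L S)
    (hSL : ∀ X : C, L X → ∀ f : S ⟶ X⟦(1:ℤ)⟧, f = 0) : Suspended (addStarShift S L) where
  iso := addStarShift_closedIso
  zero := ⟨0, 0, 𝟙 0, 0, 0, contractible_distinguished 0, h.zeroL, (addObj_addSub S).zero⟩
  shift X hX := ⟨X, 0, 0, 0, 𝟙 _, contractible_distinguished₂ X, addStarShift_le h hS hX,
    (addObj_addSub S).zero⟩
  ext := addStarShift_extClosed h hS hSL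

lemma addObj_of_addStarShift {X : C} (hX : addStarShift S L X)
    (hXL : ∀ A : C, L A → ∀ f : X ⟶ A⟦(1:ℤ)⟧, f = 0) : addObj S X := by
  obtain ⟨A, P, f, g, k, hT, hA, hP⟩ := hX
  obtain ⟨e, -, -⟩ := exists_iso_binaryBiproduct_of_distTriang _ hT (hXL A hA k)
  exact (addObj_addSub S).summand _ _ ((addObj_addSub S).iso (e ≪≫ biprod.braiding A X) hP)

end addStarShift

lemma addObj_of_suspObj_eq {S₁ S₂ : C} (h₁ : PartialSilting S₁) (h₂ : PartialSilting S₂)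
    (hsusp : ∀ X : C, suspObj S₁ X ↔ suspObj S₂ X) : addObj S₁ S₂ := by
  have hsusp₁ : Suspended (addStarShift S₁ (suspObj S₁)) :=
    addStarShift_suspended h₁.1 (suspObj_self S₁) fun X hX => h₁.2 X hX 1 Int.one_pos
  have hS₁ : addStarShift S₁ (suspObj S₁) S₁ :=
    ⟨0, S₁, 0, 𝟙 S₁, 0, contractible_distinguished₁ S₁, (suspObj_suspended S₁).zero,
      addObj_self S₁⟩
  exact addObj_of_addStarShift ((hsusp S₂).2 (suspObj_self S₂) _ hsusp₁ hS₁)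
    fun A hA => h₂.2 A ((hsusp A).1 hA) 1 Int.one_pos

lemma suspObj_of_addObj {S₁ S₂ : C} (h₂ : PartialSilting S₂) (h : addObj S₂ S₁) {X : C}
    (hX : suspObj S₁ X) : suspObj S₂ X :=
  suspObj_trans (h₂.1.mem_of_addObj (suspObj_self S₂) h) hX

/-- Two partial silting objects generate the same t-structure
(`susp(S₁) = susp(S₂)`) if and only if `add(S₁) = add(S₂)`. -/
theorem statement5 (S₁ S₂ : C) (h₁ : PartialSilting S₁) (h₂ : PartialSilting S₂) :
    (∀ X : C, suspObj S₁ X ↔ suspObj S₂ X) ↔ (∀ X : C, addObj S₁ X ↔ addObj S₂ X) := by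
  constructor
  · intro hsusp X
    have h₁₂ : addObj S₁ S₂ := addObj_of_suspObj_eq h₁ h₂ hsusp
    have h₂₁ : addObj S₂ S₁ := addObj_of_suspObj_eq h₂ h₁ fun X => (hsusp X).symm
    exact ⟨addObj_trans h₂₁, addObj_trans h₁₂⟩
  · intro hadd X
    exact ⟨suspObj_of_addObj h₂ ((hadd S₁).1 (addObj_self S₁)),
      suspObj_of_addObj h₁ ((hadd S₂).2 (addObj_self S₂))⟩

end Paper
end

section
/- Let D be a triangulated category with partial silting object P, and X ∈ U where (U,U^⊥) is any t-structure with susp(P) ⊆ U ⊆ P^{⊥_{>0}}. Then σ_P^{>0}X ≅ σ_P^{>m}X for every m ≥ 0, where σ_P^{>m} is the truncation of the shifted t-structure (Σ^{-m}susp(P), P^{⊥_{≤m}}). -/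
open CategoryTheory Limits Pretriangulated ZeroObject

universe v u

/-!
The first triangle `A → X → B` is also a truncation triangle for the shifted t-structure:
`A ∈ susp(P) ⊆ Σ^{-m} susp(P)` since `m ≥ 0`, and `B` is the cone of a morphism between objects
of `P^{⊥_{>0}}`, hence lies in `P^{⊥_{>0}} ∩ P^{⊥_{≤0}} = P^{⊥_ℤ} ⊆ P^{⊥_{≤m}}`. Truncation
triangles with respect to an orthogonal pair whose left class is closed under `Σ` are unique up to
isomorphism, so `B ≅ Bm`.
-/

namespace Paper

section Shift

variable {C : Type u} [Category.{v} C] [Preadditive C] [HasShift C ℤ]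

lemma eq_zero_of_shift_shift {Y A : C} {i j : ℤ} (hA : ∀ f : Y ⟶ A⟦i + j⟧, f = 0)
    (f : Y ⟶ (A⟦i⟧)⟦j⟧) : f = 0 := by
  simpa using congrArg (· ≫ ((shiftFunctorAdd C i j).app A).hom)
    (hA (f ≫ ((shiftFunctorAdd C i j).app A).inv))

lemma perpLe_shift {P B : C} {m n : ℤ} (hB : perpLe P (m + n) B) : perpLe P m (B⟦n⟧) :=
  fun i hi => eq_zero_of_shift_shift (hB (n + i) (by omega))

lemma perpLe_of_perpLe_zero_of_perpGt_zero {P B : C} (hle : perpLe P 0 B)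
    (hgt : perpGt P 0 B) (m : ℤ) : perpLe P m B := fun i _ =>
  if hi : i ≤ 0 then hle i hi else hgt i (by omega)

end Shift

variable {C : Type u} [Category.{v} C] [Preadditive C] [HasZeroObject C]
  [HasShift C ℤ] [∀ n : ℤ, (CategoryTheory.shiftFunctor C n).Additive] [Pretriangulated C]

lemma perpGt_obj₃_of_distTriang {P : C} {m : ℤ} {T : Triangle C} (hT : T ∈ distTriang C)
    (h₁ : perpGt P (m + 1) T.obj₁) (h₂ : perpGt P m T.obj₂) : perpGt P m T.obj₃ := by
  intro i hi u
  obtain ⟨v, rfl⟩ := Triangle.coyoneda_exact₃ _ (Triangle.shift_distinguished _ hT i) u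
    (eq_zero_of_shift_shift (h₁ (i + 1) (by omega)) _)
  rw [h₂ i hi v]
  exact zero_comp

lemma suspended_suspObj (P : C) : Suspended (suspObj P) where
  iso _ _ e hX U hU hUP := hU.iso e (hX U hU hUP)
  zero _ hU _ := hU.zero
  shift _ hX U hU hUP := hU.shift (hX U hU hUP)
  ext T hT h₁ h₃ U hU hUP := hU.ext T hT (h₁ U hU hUP) (h₃ U hU hUP)

namespace Suspended

variable {U : C → Prop}

lemma shift_of_nonneg (hU : Suspended U) {X : C} (hX : U X) {n : ℤ} (hn : 0 ≤ n) :
    U (X⟦n⟧) := by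
  lift n to ℕ using hn
  induction n with
  | zero => exact hU.iso ((shiftFunctorZero C ℤ).app X).symm hX
  | succ k ih =>
    exact hU.iso ((shiftFunctorAdd' C (k : ℤ) 1 (k + 1 : ℕ) (by push_cast; rfl)).app X).symm
      (hU.shift ih)

lemma shift_one_shift (hU : Suspended U) {X : C} {m : ℤ} (hX : U (X⟦m⟧)) :
    U ((X⟦(1:ℤ)⟧)⟦m⟧) :=
  hU.iso (((shiftFunctorAdd' C m 1 (m + 1) rfl).app X).symm ≪≫
    (shiftFunctorAdd' C 1 m (m + 1) (add_comm 1 m)).app X) (hU.shift hX)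

end Suspended

lemma PartialSilting.homZero_shift {P : C} (hP : PartialSilting P) (m : ℤ) {Y Z : C}
    (hY : suspObj P (Y⟦m⟧)) (hZ : perpLe P m Z) (f : Y ⟶ Z) : f = 0 :=
  (shiftFunctor C m).map_injective <| by
    rw [Functor.map_zero]
    exact hP.1.homZero hY (perpLe_shift (by rwa [zero_add])) _

section Truncation

variable {L G : C → Prop}

lemma exists_mor₂_comp_eq (hLG : ∀ ⦃Y Z : C⦄, L Y → G Z → ∀ u : Y ⟶ Z, u = 0)
    {T : Triangle C} (hT : T ∈ distTriang C) (hA : L T.obj₁) {Y : C} (hY : G Y)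
    (u : T.obj₂ ⟶ Y) : ∃ b : T.obj₃ ⟶ Y, T.mor₂ ≫ b = u := by
  obtain ⟨b, hb⟩ := Triangle.yoneda_exact₂ _ hT u (hLG hA hY _)
  exact ⟨b, hb.symm⟩

lemma eq_of_mor₂_comp_eq (hLG : ∀ ⦃Y Z : C⦄, L Y → G Z → ∀ u : Y ⟶ Z, u = 0)
    {T : Triangle C} (hT : T ∈ distTriang C) (hA : L (T.obj₁⟦(1:ℤ)⟧)) {Y : C} (hY : G Y)
    {b b' : T.obj₃ ⟶ Y} (e : T.mor₂ ≫ b = T.mor₂ ≫ b') : b = b' := by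
  obtain ⟨c, hc⟩ := Triangle.yoneda_exact₃ _ hT (b - b')
    (by rw [Preadditive.comp_sub, e, sub_self])
  rw [← sub_eq_zero, hc, hLG hA hY c, comp_zero]

lemma nonempty_iso_of_distTriang (hLG : ∀ ⦃Y Z : C⦄, L Y → G Z → ∀ u : Y ⟶ Z, u = 0)
    (hL : ∀ ⦃Y : C⦄, L Y → L (Y⟦(1:ℤ)⟧)) {A X B A' B' : C}
    {f : A ⟶ X} {g : X ⟶ B} {h : B ⟶ A⟦(1:ℤ)⟧} (hT : Triangle.mk f g h ∈ distTriang C)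
    (hA : L A) (hB : G B)
    {f' : A' ⟶ X} {g' : X ⟶ B'} {h' : B' ⟶ A'⟦(1:ℤ)⟧} (hT' : Triangle.mk f' g' h' ∈ distTriang C)
    (hA' : L A') (hB' : G B') :
    Nonempty (B ≅ B') := by
  obtain ⟨b, hb⟩ : ∃ b : B ⟶ B', g ≫ b = g' := exists_mor₂_comp_eq hLG hT hA hB' g'
  obtain ⟨b', hb'⟩ : ∃ b' : B' ⟶ B, g' ≫ b' = g := exists_mor₂_comp_eq hLG hT' hA' hB g
  have e : g ≫ b ≫ b' = g ≫ 𝟙 B := by rw [reassoc_of% hb, hb', Category.comp_id]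
  have e' : g' ≫ b' ≫ b = g' ≫ 𝟙 B' := by rw [reassoc_of% hb', hb, Category.comp_id]
  exact ⟨⟨b, b', eq_of_mor₂_comp_eq hLG hT (hL hA) hB e,
    eq_of_mor₂_comp_eq hLG hT' (hL hA') hB' e'⟩⟩

end Truncation

variable [HasBinaryBiproducts C]

theorem statement9_general (P : C) (hP : PartialSilting P) (U : C → Prop)
    (h2 : ∀ X : C, U X → perpGt P 0 X)
    (X : C) (hX : U X) (m : ℤ) (hm : 0 ≤ m)
    -- the truncation triangle for the t-structure `(susp(P), P^{⊥_{≤0}})`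
    (A B : C) (f : A ⟶ X) (g : X ⟶ B) (h : B ⟶ A⟦(1:ℤ)⟧)
    (hT : Triangle.mk f g h ∈ (distTriang C)) (hA : suspObj P A) (hB : perpLe P 0 B)
    -- the truncation triangle for the shifted t-structure `(Σ^{-m}susp(P), P^{⊥_{≤m}})`
    (Am Bm : C) (fm : Am ⟶ X) (gm : X ⟶ Bm) (hm' : Bm ⟶ Am⟦(1:ℤ)⟧)
    (hTm : Triangle.mk fm gm hm' ∈ (distTriang C)) (hAm : suspObj P (Am⟦m⟧))
    (hBm : perpLe P m Bm) :
    Nonempty (B ≅ Bm) := by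
  have hBgt : perpGt P 0 B :=
    perpGt_obj₃_of_distTriang hT (fun i hi => hP.2 A hA i (by omega)) (h2 X hX)
  exact nonempty_iso_of_distTriang (fun _ _ => hP.homZero_shift m)
    (fun _ hY => (suspended_suspObj P).shift_one_shift hY) hT
    ((suspended_suspObj P).shift_of_nonneg hA hm)
    (perpLe_of_perpLe_zero_of_perpGt_zero hB hBgt m) hTm hAm hBm

/-- For `X ∈ U`, where `(U, U^⊥)` is a t-structure with
`susp(P) ⊆ U ⊆ P^{⊥_{>0}}`, one has `σ_P^{>0}X ≅ σ_P^{>m}X` for every `m ≥ 0`. -/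
theorem statement9 (P : C) (hP : PartialSilting P) (U V : C → Prop)
    (hUV : IsTStr U V) (hV : ∀ Y : C, V Y ↔ rightOrth U Y)
    (h1 : ∀ X : C, suspObj P X → U X) (h2 : ∀ X : C, U X → perpGt P 0 X)
    (X : C) (hX : U X) (m : ℤ) (hm : 0 ≤ m)
    -- the truncation triangle for the t-structure `(susp(P), P^{⊥_{≤0}})`
    (A B : C) (f : A ⟶ X) (g : X ⟶ B) (h : B ⟶ A⟦(1:ℤ)⟧)
    (hT : Triangle.mk f g h ∈ (distTriang C)) (hA : suspObj P A) (hB : perpLe P 0 B)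
    -- the truncation triangle for the shifted t-structure `(Σ^{-m}susp(P), P^{⊥_{≤m}})`
    (Am Bm : C) (fm : Am ⟶ X) (gm : X ⟶ Bm) (hm' : Bm ⟶ Am⟦(1:ℤ)⟧)
    (hTm : Triangle.mk fm gm hm' ∈ (distTriang C)) (hAm : suspObj P (Am⟦m⟧))
    (hBm : perpLe P m Bm) :
    Nonempty (B ≅ Bm) :=
  statement9_general P hP U h2 X hX m hm A B f g h hT hA hB Am Bm fm gm hm' hTm hAm hBm

end Paper
end
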